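/- arXiv:2306.07006 — 7 statements merged into one kernel-verified Lean document; each statement's English description precedes it below -/
import Mathlib

section
/- Let n and d be positive integers, ℓ a Kupisch series of type Ã_{n-1}, f(i) = i - ℓ(i) - d + 1, and I = { i ∈ ℤ : (i mod n) ∈ J }. Then f maps I into I, and the restriction f|_I : I → I is a bijection. -/
/-!
The residue map `f̄` is a bijection of its own periodic points `J`, as is any self-map. Since `ℓ`
is `n`-periodic, `f` commutes with translation by `n`, so it maps each residue class mod `n`
bijectively onto the residue class of its image; hence `f` is a bijection of the preimage `I`
of `J`.
-/

/-- The set of periodic points of the induced map `f̄ : ℤ/nℤ → ℤ/nℤ`. -/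
def Jset (n : ℕ) (fbar : ZMod n → ZMod n) : Set (ZMod n) :=
  {j | ∃ N : ℕ, 1 ≤ N ∧ fbar^[N] j = j}

/-- The set of integers whose residue mod `n` lies in `J`. -/
def Iset (n : ℕ) (fbar : ZMod n → ZMod n) : Set ℤ :=
  {i | (i : ZMod n) ∈ Jset n fbar}

open Function Set

theorem Jset_eq_periodicPts (n : ℕ) (g : ZMod n → ZMod n) : Jset n g = periodicPts g := rfl

theorem Function.Periodic.add_int_mul_of_sub_id {f : ℤ → ℤ} {c : ℤ}
    (hf : Periodic (fun i ↦ f i - i) c) (k i : ℤ) : f (i + k * c) = f i + k * c := by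
  have : f (i + k * c) - (i + k * c) = f i - i := hf.int_mul k i
  omega

theorem ZMod.exists_eq_add_mul_of_intCast_eq {n : ℕ} {a b : ℤ} (h : (a : ZMod n) = b) :
    ∃ k : ℤ, b = a + k * n := by
  obtain ⟨k, hk⟩ := (ZMod.intCast_eq_intCast_iff_dvd_sub a b n).mp h
  exact ⟨k, by rw [mul_comm] at hk; omega⟩

theorem Set.BijOn.preimage_intCast {n : ℕ} {f : ℤ → ℤ}
    (hf : Periodic (fun i ↦ f i - i) n) {g : ZMod n → ZMod n} (hg : ∀ i : ℤ, g i = f i)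
    {s t : Set (ZMod n)} (hst : BijOn g s t) :
    BijOn f ((↑) ⁻¹' s) ((↑) ⁻¹' t) := by
  refine ⟨fun i hi ↦ ?_, fun a ha b hb hab ↦ ?_, fun b hb ↦ ?_⟩
  · simpa only [mem_preimage, ← hg] using hst.mapsTo hi
  · obtain ⟨k, rfl⟩ := ZMod.exists_eq_add_mul_of_intCast_eq <|
      hst.injOn ha hb (by rw [hg, hg, hab])
    have := hf.add_int_mul_of_sub_id k a
    omega
  · obtain ⟨j, hj, hjb⟩ := hst.surjOn hb
    obtain ⟨a, rfl⟩ := ZMod.intCast_surjective j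
    obtain ⟨k, hk⟩ := ZMod.exists_eq_add_mul_of_intCast_eq ((hg a).symm.trans hjb)
    refine ⟨a + k * n, ?_, by rw [hf.add_int_mul_of_sub_id, hk]⟩
    simpa only [mem_preimage, Int.cast_add, Int.cast_mul, Int.cast_natCast, ZMod.natCast_self,
      mul_zero, add_zero] using hj

theorem f_bijOn_I_general (n d : ℕ) (ℓ : ℤ → ℤ)
    (hKper : ∀ i : ℤ, ℓ (i + n) = ℓ i)
    (f : ℤ → ℤ) (hf : ∀ i : ℤ, f i = i - ℓ i - d + 1)
    (fbar : ZMod n → ZMod n)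
    (hfbar : ∀ i : ℤ, fbar (i : ZMod n) = ((f i : ℤ) : ZMod n)) :
    Set.MapsTo f (Iset n fbar) (Iset n fbar) ∧
      Set.BijOn f (Iset n fbar) (Iset n fbar) := by
  have hlift : Periodic (fun i ↦ f i - i) n := fun i ↦ by
    simp only [hf, hKper]
    ring
  have hbij : BijOn f (Iset n fbar) (Iset n fbar) := by
    rw [Iset, Jset_eq_periodicPts]
    exact (bijOn_periodicPts fbar).preimage_intCast hlift hfbar
  exact ⟨hbij.mapsTo, hbij⟩

/-- `f` maps `I` into itself and restricts to a bijection `I → I`. -/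
theorem f_bijOn_I (n d : ℕ) (hn : 0 < n) (hd : 0 < d) (ℓ : ℤ → ℤ)
    (hK1 : ∀ i : ℤ, 1 ≤ ℓ i) (hK2 : ∀ i : ℤ, ℓ i ≤ ℓ (i - 1) + 1)
    (hKper : ∀ i : ℤ, ℓ (i + n) = ℓ i)
    (f : ℤ → ℤ) (hf : ∀ i : ℤ, f i = i - ℓ i - d + 1)
    (fbar : ZMod n → ZMod n)
    (hfbar : ∀ i : ℤ, fbar (i : ZMod n) = ((f i : ℤ) : ZMod n)) :
    Set.MapsTo f (Iset n fbar) (Iset n fbar) ∧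
      Set.BijOn f (Iset n fbar) (Iset n fbar) :=
  f_bijOn_I_general n d ℓ hKper f hf fbar hfbar
end

section
/- Let n and d be positive integers, ℓ a Kupisch series of type Ã_{n-1}, f(i) = i - ℓ(i) - d + 1, and I = { i ∈ ℤ : (i mod n) ∈ J }. Then f restricted to I is strictly increasing: for all i, j ∈ I with i < j one has f(i) < f(j). In particular, f|_I is an order isomorphism of I onto itself. -/
/-- `f` restricted to `I` is strictly increasing; in particular it
is an order isomorphism of `I` onto itself (a strictly monotone bijection of `I`). -/
theorem f_strictMonoOn_I (n d : ℕ) (hn : 0 < n) (hd : 0 < d) (ℓ : ℤ → ℤ)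
    (hK1 : ∀ i : ℤ, 1 ≤ ℓ i) (hK2 : ∀ i : ℤ, ℓ i ≤ ℓ (i - 1) + 1)
    (hKper : ∀ i : ℤ, ℓ (i + n) = ℓ i)
    (f : ℤ → ℤ) (hf : ∀ i : ℤ, f i = i - ℓ i - d + 1)
    (fbar : ZMod n → ZMod n)
    (hfbar : ∀ i : ℤ, fbar (i : ZMod n) = ((f i : ℤ) : ZMod n)) :
    (∀ i ∈ Iset n fbar, ∀ j ∈ Iset n fbar, i < j → f i < f j) ∧
      Set.BijOn f (Iset n fbar) (Iset n fbar) := by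
  -- quasi-periodicity of f
  have hper : ∀ (x m : ℤ), (n : ℤ) ∣ m → f (x + m) = f x + m := by
    intro x m hdvd
    obtain ⟨k, rfl⟩ := hdvd
    have hp : Function.Periodic ℓ (n : ℤ) := hKper
    have hℓ : ℓ (x + (n : ℤ) * k) = ℓ x := by
      have := (hp.int_mul k) x
      rw [mul_comm] at this
      exact this
    rw [hf, hf, hℓ]; ring
  -- weak monotonicity
  have hmono : Monotone f := by
    apply monotone_int_of_le_succ
    intro k
    have h2 : ℓ (k + 1) ≤ ℓ k + 1 := by
      have := hK2 (k + 1)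
      simpa using this
    rw [hf, hf]
    linarith
  -- iterates commute with the reduction mod n
  have hiter : ∀ (N : ℕ) (i : ℤ),
      fbar^[N] (i : ZMod n) = ((f^[N] i : ℤ) : ZMod n) := by
    intro N
    induction N with
    | zero => intro i; simp
    | succ N ih =>
      intro i
      rw [Function.iterate_succ_apply, hfbar i, ih (f i),
        ← Function.iterate_succ_apply]
  -- strict monotonicity on I
  have hkey : ∀ i ∈ Iset n fbar, ∀ j ∈ Iset n fbar, i < j → f i < f j := by
    intro i hi j hj hij
    obtain ⟨Ni, hNi1, hNi⟩ := hi
    obtain ⟨Nj, hNj1, hNj⟩ := hj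
    rcases lt_or_eq_of_le (hmono hij.le) with h | h
    · exact h
    · exfalso
      have hiN : fbar^[Ni * Nj] (i : ZMod n) = (i : ZMod n) := by
        rw [Function.iterate_mul]
        exact Function.iterate_fixed hNi Nj
      have hjN : fbar^[Ni * Nj] (j : ZMod n) = (j : ZMod n) := by
        rw [Nat.mul_comm, Function.iterate_mul]
        exact Function.iterate_fixed hNj Ni
      have hfeq : f^[Ni * Nj] i = f^[Ni * Nj] j := by
        obtain ⟨N', hN'⟩ : ∃ N', Ni * Nj = N' + 1 :=
          ⟨Ni * Nj - 1, by have := Nat.mul_pos hNi1 hNj1; omega⟩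
        rw [hN', Function.iterate_succ_apply, Function.iterate_succ_apply, h]
      have hcast : (i : ZMod n) = (j : ZMod n) := by
        rw [← hiN, ← hjN, hiter, hiter, hfeq]
      have hdvd : (n : ℤ) ∣ j - i :=
        ((ZMod.intCast_eq_intCast_iff _ _ _).mp hcast).dvd
      have : f j = f i + (j - i) := by
        have := hper i (j - i) hdvd
        simpa using this
      omega
  refine ⟨hkey, ?_, ?_, ?_⟩
  · -- MapsTo
    intro i hi
    obtain ⟨Ni, hNi1, hNi⟩ := hi
    refine ⟨Ni, hNi1, ?_⟩
    rw [← hfbar i, ← Function.iterate_succ_apply, Function.iterate_succ_apply',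
      hNi]
  · -- InjOn
    exact StrictMonoOn.injOn (fun a ha b hb hab => hkey a ha b hb hab)
  · -- SurjOn
    intro j hj
    obtain ⟨N, hN1, hN⟩ := hj
    set m : ℤ := j - f^[N] j with hm
    have hcast : ((f^[N] j : ℤ) : ZMod n) = (j : ZMod n) := by
      rw [← hiter N j, hN]
    have hdvd : (n : ℤ) ∣ m :=
      ((ZMod.intCast_eq_intCast_iff _ _ _).mp hcast).dvd
    refine ⟨f^[N - 1] j + m, ⟨N, hN1, ?_⟩, ?_⟩
    · -- the candidate preimage lies in I
      have hcast2 : ((f^[N - 1] j + m : ℤ) : ZMod n)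
          = fbar^[N - 1] (j : ZMod n) := by
        obtain ⟨k, hk⟩ := hdvd
        push_cast [hk, hiter (N - 1) j]
        simp
      rw [hcast2, ← Function.iterate_add_apply,
        show N + (N - 1) = (N - 1) + N by omega, Function.iterate_add_apply,
        hN]
    · -- it indeed maps to j
      have hstep : f (f^[N - 1] j) = f^[N] j := by
        conv_rhs => rw [show N = (N - 1) + 1 by omega,
          Function.iterate_succ_apply']
      rw [hper _ m hdvd, hstep, hm]
      ring
end

section
/- Let n and d be positive integers, ℓ a Kupisch series of type Ã_{n-1}, f(i) = i - ℓ(i) - d + 1, and I = { i ∈ ℤ : (i mod n) ∈ J }. If i, j ∈ I are adjacent in I (that is, i < j and no element of I lies strictly between i and j), then f(i) < f(j) and f(i), f(j) are adjacent in I. -/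
/-!
Only two properties of `f` matter: it is monotone (from `ℓ i ≤ ℓ (i - 1) + 1`) and it commutes
with translation by `n` (from the periodicity of `ℓ`). The set `J` is the set of periodic points
of `f̄`, on which any self-map is a bijection. Surjectivity of `f̄` on `J` together with the
translation property gives every element of `I` a preimage in `I`, and a preimage strictly
between `f i` and `f j` would, by monotonicity, lie strictly between `i` and `j`. Injectivity of
`f̄` on `J` shows that `f i = f j` forces `j ≡ i (mod n)`, hence `j = i + n` by adjacency, and then
`f j = f i + n`.
-/

open Function

theorem mem_Iset_iff {n : ℕ} {fbar : ZMod n → ZMod n} {i : ℤ} :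
    i ∈ Iset n fbar ↔ (i : ZMod n) ∈ periodicPts fbar :=
  Iff.rfl

theorem add_mul_mem_Iset {n : ℕ} {fbar : ZMod n → ZMod n} {i : ℤ} (t : ℤ)
    (hi : i ∈ Iset n fbar) : i + t * n ∈ Iset n fbar := by
  simpa [Iset] using hi

section Adjacency

variable {n : ℕ} {f : ℤ → ℤ} {fbar : ZMod n → ZMod n}
  (hfbar : ∀ i : ℤ, fbar i = f i)
include hfbar

theorem map_mem_Iset {i : ℤ} (hi : i ∈ Iset n fbar) : f i ∈ Iset n fbar := by
  rw [mem_Iset_iff, ← hfbar]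
  exact (bijOn_periodicPts fbar).mapsTo (mem_Iset_iff.mp hi)

theorem intCast_eq_of_map_eq {i j : ℤ} (hi : i ∈ Iset n fbar) (hj : j ∈ Iset n fbar)
    (h : f i = f j) : (i : ZMod n) = j :=
  (bijOn_periodicPts fbar).injOn (mem_Iset_iff.mp hi) (mem_Iset_iff.mp hj)
    (by rw [hfbar, hfbar, h])

theorem exists_mem_Iset_map_eq (htrans : ∀ t m : ℤ, f (m + t * n) = f m + t * n) {k : ℤ}
    (hk : k ∈ Iset n fbar) : ∃ m ∈ Iset n fbar, f m = k := by
  obtain ⟨x, hx, hxk⟩ := (bijOn_periodicPts fbar).surjOn (mem_Iset_iff.mp hk)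
  obtain ⟨m₀, rfl⟩ := ZMod.intCast_surjective x
  obtain ⟨t, ht⟩ := (ZMod.intCast_eq_intCast_iff_dvd_sub _ _ _).mp ((hfbar m₀).symm.trans hxk)
  refine ⟨m₀ + t * n, add_mul_mem_Iset t (mem_Iset_iff.mpr hx), ?_⟩
  rw [htrans]
  linarith

variable (hmono : Monotone f) (htrans : ∀ t m : ℤ, f (m + t * n) = f m + t * n)
  {i j : ℤ} (hi : i ∈ Iset n fbar) (hj : j ∈ Iset n fbar) (hij : i < j)
  (hadj : ∀ k ∈ Iset n fbar, ¬(i < k ∧ k < j))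
include hmono htrans hi hj hij hadj

theorem map_lt_map_of_adjacent : f i < f j := by
  refine (hmono hij.le).lt_of_ne fun h => ?_
  obtain ⟨t, ht⟩ := (ZMod.intCast_eq_intCast_iff_dvd_sub _ _ _).mp
    (intCast_eq_of_map_eq hfbar hi hj h)
  have ht1 : 1 ≤ t := by
    by_contra! ht0
    nlinarith [n.cast_nonneg (α := ℤ)]
  have hn : (0 : ℤ) < n := by nlinarith
  have hj_eq : j = i + 1 * n :=
    le_antisymm (not_lt.mp fun hlt => hadj _ (add_mul_mem_Iset 1 hi) ⟨by linarith, hlt⟩)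
      (by nlinarith)
  have := htrans 1 i
  rw [← hj_eq, ← h] at this
  linarith

theorem map_adjacent :
    f i < f j ∧ f i ∈ Iset n fbar ∧ f j ∈ Iset n fbar ∧
      ∀ k ∈ Iset n fbar, ¬(f i < k ∧ k < f j) := by
  refine ⟨map_lt_map_of_adjacent hfbar hmono htrans hi hj hij hadj, map_mem_Iset hfbar hi,
    map_mem_Iset hfbar hj, fun k hk ⟨hik, hkj⟩ => ?_⟩
  obtain ⟨m, hm, rfl⟩ := exists_mem_Iset_map_eq hfbar htrans hk
  exact hadj m hm ⟨hmono.reflect_lt hik, hmono.reflect_lt hkj⟩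

end Adjacency

theorem f_preserves_adjacency_general (n d : ℕ) (ℓ : ℤ → ℤ)
    (hK2 : ∀ i : ℤ, ℓ i ≤ ℓ (i - 1) + 1)
    (hKper : ∀ i : ℤ, ℓ (i + n) = ℓ i)
    (f : ℤ → ℤ) (hf : ∀ i : ℤ, f i = i - ℓ i - d + 1)
    (fbar : ZMod n → ZMod n)
    (hfbar : ∀ i : ℤ, fbar (i : ZMod n) = ((f i : ℤ) : ZMod n))
    (i j : ℤ) (hi : i ∈ Iset n fbar) (hj : j ∈ Iset n fbar)
    (hij : i < j) (hadj : ∀ k ∈ Iset n fbar, ¬(i < k ∧ k < j)) :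
    f i < f j ∧ f i ∈ Iset n fbar ∧ f j ∈ Iset n fbar ∧
      ∀ k ∈ Iset n fbar, ¬(f i < k ∧ k < f j) := by
  have hmono : Monotone f := monotone_int_of_le_succ fun m => by
    have := hK2 (m + 1)
    rw [add_sub_cancel_right] at this
    rw [hf, hf]
    linarith
  have htrans : ∀ t m : ℤ, f (m + t * n) = f m + t * n := fun t m => by
    have hℓ : ℓ (m + t * n) = ℓ m := by simpa using (Periodic.int_mul hKper t) m
    rw [hf, hf, hℓ]
    ring
  exact map_adjacent hfbar hmono htrans hi hj hij hadj

/-- if `i < j` are adjacent elements of `I` then `f i < f j` and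
`f i`, `f j` are adjacent elements of `I`. -/
theorem f_preserves_adjacency (n d : ℕ) (hn : 0 < n) (hd : 0 < d) (ℓ : ℤ → ℤ)
    (hK1 : ∀ i : ℤ, 1 ≤ ℓ i) (hK2 : ∀ i : ℤ, ℓ i ≤ ℓ (i - 1) + 1)
    (hKper : ∀ i : ℤ, ℓ (i + n) = ℓ i)
    (f : ℤ → ℤ) (hf : ∀ i : ℤ, f i = i - ℓ i - d + 1)
    (fbar : ZMod n → ZMod n)
    (hfbar : ∀ i : ℤ, fbar (i : ZMod n) = ((f i : ℤ) : ZMod n))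
    (i j : ℤ) (hi : i ∈ Iset n fbar) (hj : j ∈ Iset n fbar)
    (hij : i < j) (hadj : ∀ k ∈ Iset n fbar, ¬(i < k ∧ k < j)) :
    f i < f j ∧ f i ∈ Iset n fbar ∧ f j ∈ Iset n fbar ∧
      ∀ k ∈ Iset n fbar, ¬(f i < k ∧ k < f j) :=
  f_preserves_adjacency_general n d ℓ hK2 hKper f hf fbar hfbar i j hi hj hij hadj
end

section
/- Let n and d be positive integers, ℓ a Kupisch series of type Ã_{n-1}, and f(i) = i - ℓ(i) - d + 1. Let x = (x_1, …, x_{d+1}) ∈ os_ℓ^{d+1} be such that f(x_1) < f(x_2) < ⋯ < f(x_{d+1}) < x_1. Then (f(x_1), f(x_2), …, f(x_{d+1})) ∈ os_ℓ^{d+1}. -/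
/-! Since `ℓ` grows by at most one per step, `i ↦ i - ℓ i` is monotone. Applied to
`f (x_{d+1}) < x₁` this gives `f (x_{d+1}) - ℓ (f (x_{d+1})) ≤ x₁ - ℓ x₁`, which is the
length condition for `(f x₁, …, f x_{d+1})` after substituting `f x₁ = x₁ - ℓ x₁ - d + 1`. -/

theorem monotone_sub_of_le_pred_add_one {ℓ : ℤ → ℤ} (h : ∀ i, ℓ i ≤ ℓ (i - 1) + 1) :
    Monotone fun i => i - ℓ i :=
  monotone_int_of_le_succ fun i => by
    have := h (i + 1)
    rw [add_sub_cancel_right] at this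
    omega

theorem f_of_os_mem_os_general (d : ℕ) (ℓ : ℤ → ℤ)
    (hK2 : ∀ i : ℤ, ℓ i ≤ ℓ (i - 1) + 1)
    (f : ℤ → ℤ) (hf : ∀ i : ℤ, f i = i - ℓ i - d + 1)
    (x : Fin (d + 1) → ℤ)
    (hfxmono : StrictMono (fun i => f (x i)))
    (hfxlt : f (x (Fin.last d)) < x 0) :
    StrictMono (fun i => f (x i)) ∧
      f (x (Fin.last d)) - f (x 0) + 1 ≤ ℓ (f (x (Fin.last d))) + d := by
  refine ⟨hfxmono, ?_⟩
  have hle : f (x (Fin.last d)) - ℓ (f (x (Fin.last d))) ≤ x 0 - ℓ (x 0) :=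
    monotone_sub_of_le_pred_add_one hK2 hfxlt.le
  have hfx0 := hf (x 0)
  omega

/-- if `x ∈ os_ℓ^{d+1}` and `f x₁ < f x₂ < ⋯ < f x_{d+1} < x₁`,
then `(f x₁, …, f x_{d+1}) ∈ os_ℓ^{d+1}`.  Here members of `os_ℓ^{d+1}` are
strictly increasing `x : Fin (d+1) → ℤ` with
`x_last - x_0 + 1 ≤ ℓ (x_last) + d`. -/
theorem f_of_os_mem_os (n d : ℕ) (hn : 0 < n) (hd : 0 < d) (ℓ : ℤ → ℤ)
    (hK1 : ∀ i : ℤ, 1 ≤ ℓ i) (hK2 : ∀ i : ℤ, ℓ i ≤ ℓ (i - 1) + 1)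
    (hKper : ∀ i : ℤ, ℓ (i + n) = ℓ i)
    (f : ℤ → ℤ) (hf : ∀ i : ℤ, f i = i - ℓ i - d + 1)
    (x : Fin (d + 1) → ℤ) (hxmono : StrictMono x)
    (hxos : x (Fin.last d) - x 0 + 1 ≤ ℓ (x (Fin.last d)) + d)
    (hfxmono : StrictMono (fun i => f (x i)))
    (hfxlt : f (x (Fin.last d)) < x 0) :
    StrictMono (fun i => f (x i)) ∧
      f (x (Fin.last d)) - f (x 0) + 1 ≤ ℓ (f (x (Fin.last d))) + d :=
  f_of_os_mem_os_general d ℓ hK2 f hf x hfxmono hfxlt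
end

section
/- Let n and d be positive integers, ℓ a Kupisch series of type Ã_{n-1}, f(i) = i - ℓ(i) - d + 1, and I = { i ∈ ℤ : (i mod n) ∈ J }. Suppose x = (x_1, …, x_{d+1}) ∈ os_ℓ^{d+1} has all its coordinates in I and satisfies f(x_{d+1}) < x_1. Then y = (f(x_{d+1}), x_1, …, x_d) belongs to os_ℓ^{d+1}, all coordinates of y lie in I, and f(y_{d+1}) < y_1, i.e. f(x_d) < f(x_{d+1}). -/
lemma ell_add_nat (ℓ : ℤ → ℤ) (hK2 : ∀ i : ℤ, ℓ i ≤ ℓ (i - 1) + 1) :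
    ∀ (k : ℕ) (a : ℤ), ℓ (a + k) ≤ ℓ a + k := by
  intro k
  induction k with
  | zero => simp
  | succ m ih =>
    intro a
    have h := hK2 (a + ((m : ℤ) + 1))
    have he : a + ((m : ℤ) + 1) - 1 = a + m := by ring
    rw [he] at h
    have := ih a
    push_cast
    push_cast at h this
    linarith

lemma ell_le_of_le (ℓ : ℤ → ℤ) (hK2 : ∀ i : ℤ, ℓ i ≤ ℓ (i - 1) + 1)
    {a b : ℤ} (hab : a ≤ b) : ℓ b ≤ ℓ a + (b - a) := by
  have h := ell_add_nat ℓ hK2 (b - a).toNat a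
  rw [Int.toNat_of_nonneg (by omega)] at h
  have he : a + (b - a) = b := by ring
  rw [he] at h
  omega

lemma ell_per_nat (n : ℕ) (ℓ : ℤ → ℤ) (hKper : ∀ i : ℤ, ℓ (i + n) = ℓ i) :
    ∀ (k : ℕ) (i : ℤ), ℓ (i + k * n) = ℓ i := by
  intro k
  induction k with
  | zero => simp
  | succ m ih =>
    intro i
    have h1 : i + ((m : ℤ) + 1) * n = (i + m * n) + n := by ring
    push_cast
    rw [h1, hKper, ih]

lemma jset_closed (n : ℕ) (fbar : ZMod n → ZMod n) {j : ZMod n}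
    (hj : j ∈ Jset n fbar) : fbar j ∈ Jset n fbar := by
  obtain ⟨N, hN, hfix⟩ := hj
  exact ⟨N, hN, by rw [← Function.iterate_succ_apply, Function.iterate_succ_apply', hfix]⟩

lemma jset_inj (n : ℕ) (fbar : ZMod n → ZMod n) {a b : ZMod n}
    (ha : a ∈ Jset n fbar) (hb : b ∈ Jset n fbar) (hab : fbar a = fbar b) :
    a = b := by
  obtain ⟨N₁, hN₁, hfa⟩ := ha
  obtain ⟨N₂, hN₂, hfb⟩ := hb
  have hfixmul : ∀ (j : ZMod n) (N k : ℕ), fbar^[N] j = j → fbar^[k * N] j = j := by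
    intro j N k hfix
    induction k with
    | zero => simp
    | succ m ih => rw [Nat.succ_mul, Function.iterate_add_apply, hfix, ih]
  have ha' : fbar^[N₁ * N₂] a = a := by
    rw [mul_comm]; exact hfixmul a N₁ N₂ hfa
  have hb' : fbar^[N₁ * N₂] b = b := hfixmul b N₂ N₁ hfb
  have hp : 0 < N₁ * N₂ := Nat.mul_pos hN₁ hN₂
  obtain ⟨M, hM⟩ : ∃ M, N₁ * N₂ = M + 1 := ⟨N₁ * N₂ - 1, by omega⟩
  rw [hM, Function.iterate_succ_apply] at ha' hb'
  rw [← ha', ← hb', hab]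


/-- if `x ∈ os_ℓ^{d+1}` has all coordinates in `I` and
`f x_{d+1} < x₁`, then `y = (f x_{d+1}, x₁, …, x_d)` belongs to `os_ℓ^{d+1}`,
all coordinates of `y` lie in `I`, and `f y_{d+1} < y₁`. -/
theorem syzygy_sequence_mem (n d : ℕ) (hn : 0 < n) (hd : 0 < d) (ℓ : ℤ → ℤ)
    (hK1 : ∀ i : ℤ, 1 ≤ ℓ i) (hK2 : ∀ i : ℤ, ℓ i ≤ ℓ (i - 1) + 1)
    (hKper : ∀ i : ℤ, ℓ (i + n) = ℓ i)
    (f : ℤ → ℤ) (hf : ∀ i : ℤ, f i = i - ℓ i - d + 1)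
    (fbar : ZMod n → ZMod n)
    (hfbar : ∀ i : ℤ, fbar (i : ZMod n) = ((f i : ℤ) : ZMod n))
    (x : Fin (d + 1) → ℤ) (hxmono : StrictMono x)
    (hxos : x (Fin.last d) - x 0 + 1 ≤ ℓ (x (Fin.last d)) + d)
    (hxI : ∀ i, x i ∈ Iset n fbar)
    (hlt : f (x (Fin.last d)) < x 0)
    (y : Fin (d + 1) → ℤ)
    (hy0 : y 0 = f (x (Fin.last d)))
    (hysucc : ∀ i : Fin d, y i.succ = x i.castSucc) :
    StrictMono y ∧
      y (Fin.last d) - y 0 + 1 ≤ ℓ (y (Fin.last d)) + d ∧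
      (∀ i, y i ∈ Iset n fbar) ∧
      f (y (Fin.last d)) < y 0 := by
  -- f is monotone
  have fmono : ∀ {a b : ℤ}, a ≤ b → f a ≤ f b := by
    intro a b hab
    have := ell_le_of_le ℓ hK2 hab
    rw [hf a, hf b]; omega
  -- strict version on Iset
  have fstrict : ∀ {a b : ℤ}, a ∈ Iset n fbar → b ∈ Iset n fbar → a < b → f a < f b := by
    intro a b ha hb hab
    by_cases hcong : (a : ZMod n) = (b : ZMod n)
    · -- b = a + k * n, k ≥ 1
      have hdvd : (n : ℤ) ∣ b - a := by
        rwa [← ZMod.intCast_zmod_eq_zero_iff_dvd, Int.cast_sub, sub_eq_zero, eq_comm]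
      obtain ⟨k, hk⟩ := hdvd
      have hk0 : 0 < k := by
        by_contra h
        push_neg at h
        have h2 : (n : ℤ) * k ≤ 0 :=
          mul_nonpos_iff.mpr (Or.inl ⟨by positivity, h⟩)
        linarith
      have hper : ℓ (a + ↑n * k) = ℓ a := by
        have := ell_per_nat n ℓ hKper k.toNat a
        rw [Int.toNat_of_nonneg hk0.le, mul_comm] at this
        exact this
      have hb' : b = a + ↑n * k := by linarith
      rw [hf a, hf b, hb', hper]
      have hpos : 0 < (n : ℤ) * k := by positivity
      linarith
    · -- residues distinct, use injectivity on J
      have hle := fmono hab.le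
      rcases hle.lt_or_eq with h | h
      · exact h
      · exfalso
        apply hcong
        apply jset_inj n fbar ha hb
        rw [hfbar a, hfbar b, h]
  -- Iset closed under f
  have fIset : ∀ {a : ℤ}, a ∈ Iset n fbar → f a ∈ Iset n fbar := by
    intro a ha
    have := jset_closed n fbar ha
    rwa [hfbar a] at this
  -- the last index of y
  have hdm : (d - 1 : ℕ) < d := by omega
  set dm : Fin d := ⟨d - 1, hdm⟩ with hdmdef
  have hsuccdm : dm.succ = Fin.last d := by
    ext; simp [hdmdef, Fin.last]; omega
  have hylast : y (Fin.last d) = x dm.castSucc := by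
    rw [← hsuccdm, hysucc]
  have hxdm_lt : x dm.castSucc < x (Fin.last d) := by
    apply hxmono
    simp [Fin.lt_def, hdmdef, Fin.last]; omega
  refine ⟨?_, ?_, ?_, ?_⟩
  · -- StrictMono y
    rw [Fin.strictMono_iff_lt_succ]
    intro i
    rcases i with ⟨k, hk⟩
    cases k with
    | zero =>
      have h0 : ((⟨0, hk⟩ : Fin d).castSucc) = (0 : Fin (d+1)) := rfl
      rw [h0, hy0, hysucc]
      calc f (x (Fin.last d)) < x 0 := hlt
        _ ≤ x ((⟨0, hk⟩ : Fin d).castSucc) := le_of_eq (by congr 1)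
    | succ m =>
      have hm : m < d := by omega
      have h1 : (⟨m+1, hk⟩ : Fin d).castSucc = (⟨m, hm⟩ : Fin d).succ := rfl
      rw [h1, hysucc, hysucc]
      apply hxmono
      simp [Fin.lt_def]
  · -- os condition
    rw [hylast, hy0]
    have h1 : f (x dm.castSucc) ≤ f (x (Fin.last d)) := fmono hxdm_lt.le
    rw [hf (x dm.castSucc)] at h1
    omega
  · -- Iset membership
    intro i
    refine Fin.cases ?_ ?_ i
    · rw [hy0]; exact fIset (hxI _)
    · intro j; rw [hysucc]; exact hxI _
  · -- strict inequality
    rw [hylast, hy0]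
    exact fstrict (hxI _) (hxI _) hxdm_lt
end

section
/- Let n and d be positive integers, ℓ a Kupisch series of type Ã_{n-1}, f(i) = i - ℓ(i) - d + 1, I = { i ∈ ℤ : (i mod n) ∈ J }, ι : ℤ → I the unique order-preserving bijection, and let ℓ' be the common value of ℓ'(k) = |[f(ι(k)), ι(k)] ∩ I| - d. Assume ℓ' ≥ 2, and let c : ℤ → ℤ be the constant function with value ℓ'. Then the coordinatewise map ι : (x_1, …, x_{d+1}) ↦ (ι(x_1), …, ι(x_{d+1})) is a bijection from os_c^{d+1} onto os_I^{d+1} = { x ∈ os_ℓ^{d+1} : x_i ∈ I for all 1 ≤ i ≤ d+1 }, and for all x, y ∈ os_c^{d+1} one has x ≼ y if and only if ι(x) ≼ ι(y). -/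
/-- Membership in the set of ordered sequences `os_L^{d+1}`:
a strictly increasing sequence `x` of length `d+1` with
`x_last - x_0 + 1 ≤ L (x_last) + (d+1) - 1`. -/
def OsMem (d : ℕ) (L : ℤ → ℤ) (x : Fin (d + 1) → ℤ) : Prop :=
  StrictMono x ∧ x (Fin.last d) - x 0 + 1 ≤ L (x (Fin.last d)) + d

/-- The relation `x ≼ y`: `x₁ ≤ y₁ < x₂ ≤ y₂ < ⋯ < x_{d+1} ≤ y_{d+1}`. -/
def OsLe (d : ℕ) (x y : Fin (d + 1) → ℤ) : Prop :=
  (∀ i, x i ≤ y i) ∧ ∀ i : Fin d, y i.castSucc < x i.succ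

/-- A strictly monotone map on `ℤ` grows at least linearly. -/
private lemma gap_le {ι : ℤ → ℤ} (hι : StrictMono ι) (a b : ℤ) (hab : a ≤ b) :
    b - a ≤ ι b - ι a := by
  obtain ⟨k, hk⟩ := Int.le.dest hab
  clear hab
  induction k generalizing b with
  | zero =>
    obtain rfl : a = b := by omega
    omega
  | succ k ih =>
    have h1 := ih (a + k) (by push_cast; ring)
    have h2 : ι (a + k) < ι b := hι (by omega)
    omega

/-- From the cardinality of `[a, ι k] ∩ I` we extract the two key bounds. -/
private lemma key_bounds {I : Set ℤ} {ι : ℤ → ℤ} (hι : StrictMono ι)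
    (hrange : Set.range ι = I) (k a c : ℤ) (ha : a ≤ ι k)
    (hcard : ((Set.Icc a (ι k) ∩ I).ncard : ℤ) = c) :
    a ≤ ι (k + 1 - c) ∧ ι (k - c) < a := by
  set U : Set ℤ := {j | a ≤ ι j ∧ j ≤ k} with hU
  have hUS : ι '' U = Set.Icc a (ι k) ∩ I := by
    ext z
    constructor
    · rintro ⟨j, ⟨hj1, hj2⟩, rfl⟩
      exact ⟨⟨hj1, hι.monotone hj2⟩, hrange ▸ Set.mem_range_self j⟩
    · rintro ⟨⟨h1, h2⟩, hzI⟩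
      rw [← hrange] at hzI
      obtain ⟨j, rfl⟩ := hzI
      exact ⟨j, ⟨h1, hι.le_iff_le.mp h2⟩, rfl⟩
  have hsub : U ⊆ Set.Icc (k - (ι k - a)) k := by
    rintro j ⟨hj1, hj2⟩
    have := gap_le hι j k hj2
    constructor <;> omega
  have hfin : U.Finite := (Set.finite_Icc _ _).subset hsub
  have hkU : k ∈ U := ⟨ha, le_refl k⟩
  obtain ⟨m, hmU, hmin⟩ : ∃ m ∈ U, ∀ j ∈ U, m ≤ j := by
    obtain ⟨m, hm1, hm2⟩ :=
      hfin.toFinset.exists_min_image id ⟨k, hfin.mem_toFinset.mpr hkU⟩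
    exact ⟨m, hfin.mem_toFinset.mp hm1, fun j hj => hm2 j (hfin.mem_toFinset.mpr hj)⟩
  have hUeq : U = Set.Icc m k := by
    ext j
    constructor
    · intro hj; exact ⟨hmin j hj, hj.2⟩
    · rintro ⟨h1, h2⟩; exact ⟨le_trans hmU.1 (hι.monotone h1), h2⟩
  have hcU : (U.ncard : ℤ) = c := by
    rw [← hcard, ← hUS, Set.ncard_image_of_injective _ hι.injective]
  have hmk : m ≤ k := hmU.2
  have hm : m = k + 1 - c := by
    rw [hUeq, ← Finset.coe_Icc, Set.ncard_coe_finset, Int.card_Icc] at hcU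
    omega
  constructor
  · have := hmU.1; rwa [hm] at this
  · have hnot : m - 1 ∉ U := fun h => by have := hmin _ h; omega
    have hlt : ¬ (a ≤ ι (m - 1)) := fun h => hnot ⟨h, by omega⟩
    have heq : k - c = m - 1 := by omega
    rw [heq]; omega

/-- assuming `ℓ' ≥ 2` (where `ℓ'` is the common value of
`k ↦ |[f(ι k), ι k] ∩ I| - d`), the coordinatewise map induced by `ι` is a
bijection from `os_c^{d+1}` (for the constant series `c = ℓ'`) onto
`os_I^{d+1} = { x ∈ os_ℓ^{d+1} : all coordinates of x lie in I }`, and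
`x ≼ y ↔ ι(x) ≼ ι(y)`. -/
theorem iota_coordinatewise_bijOn (n d : ℕ) (hn : 0 < n) (hd : 0 < d) (ℓ : ℤ → ℤ)
    (hK1 : ∀ i : ℤ, 1 ≤ ℓ i) (hK2 : ∀ i : ℤ, ℓ i ≤ ℓ (i - 1) + 1)
    (hKper : ∀ i : ℤ, ℓ (i + n) = ℓ i)
    (f : ℤ → ℤ) (hf : ∀ i : ℤ, f i = i - ℓ i - d + 1)
    (fbar : ZMod n → ZMod n)
    (hfbar : ∀ i : ℤ, fbar (i : ZMod n) = ((f i : ℤ) : ZMod n))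
    (ι : ℤ → ℤ) (hι : StrictMono ι) (hrange : Set.range ι = Iset n fbar)
    (ℓ' : ℤ)
    (hℓ' : ∀ k : ℤ,
      ((Set.Icc (f (ι k)) (ι k) ∩ Iset n fbar).ncard : ℤ) - d = ℓ')
    (hℓ'2 : 2 ≤ ℓ') :
    Set.BijOn (fun x : Fin (d + 1) → ℤ => ι ∘ x)
      {x | OsMem d (fun _ => ℓ') x}
      {x | OsMem d ℓ x ∧ ∀ i, x i ∈ Iset n fbar} ∧
    (∀ x y : Fin (d + 1) → ℤ, OsMem d (fun _ => ℓ') x →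
      OsMem d (fun _ => ℓ') y → (OsLe d x y ↔ OsLe d (ι ∘ x) (ι ∘ y))) := by
  -- The two key bounds, for every k.
  have hfle : ∀ k : ℤ, f (ι k) ≤ ι k := by
    intro k
    have h1 := hK1 (ι k)
    rw [hf]
    omega
  have hkey : ∀ k : ℤ,
      f (ι k) ≤ ι (k + 1 - (ℓ' + d)) ∧ ι (k - (ℓ' + d)) < f (ι k) := by
    intro k
    refine key_bounds hι hrange k (f (ι k)) (ℓ' + d) (hfle k) ?_
    have := hℓ' k
    omega
  constructor
  · refine ⟨?_, ?_, ?_⟩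
    · -- MapsTo
      rintro x ⟨hxm, hxb⟩
      refine ⟨⟨hι.comp hxm, ?_⟩, fun i => hrange ▸ Set.mem_range_self _⟩
      simp only [Function.comp_apply]
      have hxb' : x (Fin.last d) - x 0 + 1 ≤ ℓ' + d := hxb
      have h1 : x (Fin.last d) + 1 - (ℓ' + d) ≤ x 0 := by omega
      have h2 := hι.monotone h1
      have h3 := (hkey (x (Fin.last d))).1
      rw [hf] at h3
      omega
    · -- InjOn
      intro x _ y _ h
      funext i
      exact hι.injective (congrFun h i)
    · -- SurjOn
      rintro y ⟨⟨hym, hyb⟩, hyI⟩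
      have hmem : ∀ i, ∃ j, ι j = y i := by
        intro i
        have := hyI i
        rw [← hrange] at this
        exact this
      choose x hx using hmem
      have hxm : StrictMono x := by
        intro i j hij
        have := hym hij
        rw [← hx i, ← hx j] at this
        exact hι.lt_iff_lt.mp this
      refine ⟨x, ⟨hxm, ?_⟩, funext fun i => hx i⟩
      show x (Fin.last d) - x 0 + 1 ≤ ℓ' + (d : ℤ)
      by_contra hcon
      push_neg at hcon
      have h1 : x 0 ≤ x (Fin.last d) - (ℓ' + d) := by omega
      have h2 := hι.monotone h1
      have h3 := (hkey (x (Fin.last d))).2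
      rw [hf] at h3
      rw [← hx 0, ← hx (Fin.last d)] at hyb
      omega
  · -- OsLe equivalence
    intro x y _ _
    constructor
    · rintro ⟨h1, h2⟩
      exact ⟨fun i => hι.monotone (h1 i), fun i => hι (h2 i)⟩
    · rintro ⟨h1, h2⟩
      exact ⟨fun i => hι.le_iff_le.mp (h1 i), fun i => hι.lt_iff_lt.mp (h2 i)⟩
end

section
/- Let n and d be positive integers, ℓ a Kupisch series of type Ã_{n-1}, f(i) = i - ℓ(i) - d + 1, I = { i ∈ ℤ : (i mod n) ∈ J }, and let ℓ' be the common value of ℓ'(k) = |[f(ι(k)), ι(k)] ∩ I| - d. If ℓ' ≤ 1, then every x = (x_1, …, x_{d+1}) ∈ os_ℓ^{d+1} all of whose coordinates lie in I satisfies f(x_{d+1}) = x_1. (In particular, if ℓ' ≤ 0 then no element of os_ℓ^{d+1} has all its coordinates in I.) -/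
/-- if `ℓ' ≤ 1` (where `ℓ'` is the common value of
`k ↦ |[f(ι k), ι k] ∩ I| - d`), then every `x ∈ os_ℓ^{d+1}` with all
coordinates in `I` satisfies `f x_{d+1} = x₁`. -/
theorem ellprime_le_one_projective (n d : ℕ) (hn : 0 < n) (hd : 0 < d)
    (ℓ : ℤ → ℤ)
    (hK1 : ∀ i : ℤ, 1 ≤ ℓ i) (hK2 : ∀ i : ℤ, ℓ i ≤ ℓ (i - 1) + 1)
    (hKper : ∀ i : ℤ, ℓ (i + n) = ℓ i)
    (f : ℤ → ℤ) (hf : ∀ i : ℤ, f i = i - ℓ i - d + 1)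
    (fbar : ZMod n → ZMod n)
    (hfbar : ∀ i : ℤ, fbar (i : ZMod n) = ((f i : ℤ) : ZMod n))
    (ι : ℤ → ℤ) (hι : StrictMono ι) (hrange : Set.range ι = Iset n fbar)
    (ℓ' : ℤ)
    (hℓ' : ∀ k : ℤ,
      ((Set.Icc (f (ι k)) (ι k) ∩ Iset n fbar).ncard : ℤ) - d = ℓ')
    (hle : ℓ' ≤ 1) :
    ∀ x : Fin (d + 1) → ℤ, StrictMono x →
      x (Fin.last d) - x 0 + 1 ≤ ℓ (x (Fin.last d)) + d →
      (∀ i, x i ∈ Iset n fbar) →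
      f (x (Fin.last d)) = x 0 := by
  intro x hx hxle hxI
  set xl := x (Fin.last d) with hxl
  obtain ⟨k, hk⟩ : xl ∈ Set.range ι := by rw [hrange]; exact hxI _
  have hcard : ((Set.Icc (f xl) xl ∩ Iset n fbar).ncard : ℤ) = d + ℓ' := by
    have h := hℓ' k; rw [hk] at h; linarith
  have hfle : f xl ≤ x 0 := by have := hf xl; omega
  by_contra hne
  have hflt : f xl < x 0 := lt_of_le_of_ne hfle hne
  have hfI : f xl ∈ Iset n fbar := by
    obtain ⟨N, hN1, hNeq⟩ := hxI (Fin.last d)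
    refine ⟨N, hN1, ?_⟩
    rw [← hfbar]
    calc fbar^[N] (fbar (xl : ZMod n))
        = fbar (fbar^[N] (xl : ZMod n)) :=
          (Function.iterate_succ_apply _ N _).symm.trans
            (Function.iterate_succ_apply' _ N _)
      _ = fbar (xl : ZMod n) := by rw [hNeq]
  have hmono : ∀ i : Fin (d+1), x i ≤ xl := fun i => hx.monotone (Fin.le_last i)
  have h0 : ∀ i : Fin (d+1), x 0 ≤ x i := fun i => hx.monotone (Fin.zero_le i)
  set S := Set.Icc (f xl) xl ∩ Iset n fbar with hS
  have hSfin : S.Finite := (Set.finite_Icc _ _).inter_of_left _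
  classical
  let T : Finset ℤ := insert (f xl) (Finset.image x Finset.univ)
  have hTsub : ↑T ⊆ S := by
    intro a ha
    simp only [T, Finset.coe_insert, Set.mem_insert_iff, Finset.coe_image,
      Set.image_univ, Set.mem_range, Finset.coe_univ] at ha
    rcases ha with rfl | ⟨i, rfl⟩
    · exact ⟨⟨le_refl _, le_trans hfle (hmono 0)⟩, hfI⟩
    · exact ⟨⟨le_trans hfle (h0 i), hmono i⟩, hxI i⟩
  have hTcard : T.card = d + 2 := by
    rw [Finset.card_insert_of_notMem, Finset.card_image_of_injective _ hx.injective,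
      Finset.card_univ, Fintype.card_fin]
    simp only [Finset.mem_image, Finset.mem_univ, true_and, not_exists]
    intro i hi
    have := h0 i
    omega
  have hle2 : (T.card : ℤ) ≤ (S.ncard : ℤ) := by
    exact_mod_cast Set.ncard_coe_finset T ▸ Set.ncard_le_ncard hTsub hSfin
  rw [hTcard, hcard] at hle2
  push_cast at hle2
  omega
end
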